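/- arXiv:1608.05820 — 4 statements merged into one kernel-verified Lean document; each statement's English description precedes it below -/
import Mathlib

section
/- Let r = m_1 + m_2 + ⋯ + m_s be a composition of r into positive integers, and for an indeterminate X let B_m(X) be the r × m matrix whose first column is (1, X, X^2, …, X^{r−1})^T and whose (j+1)-st column is obtained from the j-th by applying the operator X·(d/dX), i.e., the (i,j) entry of B_m(X) is i^{j}·X^{i} for 0 ≤ i ≤ r−1, 0 ≤ j ≤ m−1 (with the convention 0^0 = 1). Then det[B_{m_1}(X_1) B_{m_2}(X_2) ⋯ B_{m_s}(X_s)] = (∏_{l=1}^{s} ∏_{j=1}^{m_l−1} j!) · (∏_{l=1}^{s} X_l^{C(m_l,2)}) · ∏_{1 ≤ i < j ≤ s} (X_j − X_i)^{m_i m_j}, as an identity of polynomials in X_1,…,X_s. -/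
namespace FH
open Finset

variable {R : Type*} [CommRing R] {S : Type*} [CommRing S]

/-- Complete homogeneous polynomial of degree `d` in the elements of the list. -/
def hp : ℕ → List R → R
  | 0, _ => 1
  | _+1, [] => 0
  | d+1, x :: L => x * hp d (x :: L) + hp (d+1) L
termination_by d L => d + L.length

@[simp] lemma hp_zero (L : List R) : hp 0 L = 1 := by cases L <;> simp [hp]
@[simp] lemma hp_nil_succ (d : ℕ) : hp (d+1) ([] : List R) = 0 := by simp [hp]
lemma hp_cons_succ (d : ℕ) (x : R) (L : List R) :
    hp (d+1) (x :: L) = x * hp d (x :: L) + hp (d+1) L := by rw [hp]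

/-- `ℤ`-indexed version, zero for negative degrees. -/
def hz (k : ℤ) (L : List R) : R := if 0 ≤ k then hp k.toNat L else 0

lemma hz_neg {k : ℤ} (h : k < 0) (L : List R) : hz k L = 0 := by
  simp [hz, not_le.2 h]

@[simp] lemma hz_zero (L : List R) : hz 0 L = 1 := by simp [hz]

lemma hz_coe (d : ℕ) (L : List R) : hz (d : ℤ) L = hp d L := by simp [hz]

lemma hz_cons (k : ℤ) (x : R) (L : List R) :
    hz k (x :: L) = x * hz (k-1) (x :: L) + hz k L := by
  rcases lt_trichotomy k 0 with h | h | h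
  · rw [hz_neg h, hz_neg h, hz_neg (by omega)]; ring
  · subst h; rw [hz_zero, hz_zero, hz_neg (by omega)]; ring
  · obtain ⟨d, rfl⟩ : ∃ d : ℕ, k = ((d+1 : ℕ) : ℤ) := ⟨(k-1).toNat, by omega⟩
    have h2 : (((d+1:ℕ) : ℤ) - 1) = (d : ℤ) := by push_cast; ring
    rw [h2, hz_coe, hz_coe, hz_coe, hp_cons_succ]

lemma hp_sub (d : ℕ) (x z : R) (L : List R) :
    hp (d+1) (x :: L) - hp (d+1) (z :: L) = (x - z) * hp d (x :: z :: L) := by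
  induction d with
  | zero => rw [hp_cons_succ, hp_cons_succ, hp_zero, hp_zero, hp_zero]; ring
  | succ d ih =>
    have e1 : hp (d+1+1) (x::L) - hp (d+1+1) (z::L)
        = x * (hp (d+1) (x::L) - hp (d+1) (z::L)) + (x - z) * hp (d+1) (z::L) := by
      rw [hp_cons_succ (d+1) x L, hp_cons_succ (d+1) z L]
      ring
    rw [e1, ih, hp_cons_succ (d := d) (x := x) (L := z :: L)]
    ring

lemma hz_sub (k : ℤ) (x z : R) (L : List R) :
    hz k (x :: L) - hz k (z :: L) = (x - z) * hz (k-1) (x :: z :: L) := by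
  rcases lt_trichotomy k 0 with h | h | h
  · rw [hz_neg h, hz_neg h, hz_neg (by omega)]; ring
  · subst h; rw [hz_zero, hz_zero, hz_neg (by omega)]; ring
  · obtain ⟨d, rfl⟩ : ∃ d : ℕ, k = ((d+1:ℕ) : ℤ) := ⟨(k-1).toNat, by omega⟩
    have h2 : (((d+1:ℕ) : ℤ) - 1) = (d : ℤ) := by push_cast; ring
    rw [h2, hz_coe, hz_coe, hz_coe, hp_sub]

@[simp] lemma hp_single (d : ℕ) (x : R) : hp d [x] = x ^ d := by
  induction d with
  | zero => simp
  | succ d ih => rw [hp_cons_succ, ih]; simp [pow_succ]; ring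

lemma hz_single (i : ℕ) (x : R) : hz (i : ℤ) [x] = x ^ i := by rw [hz_coe, hp_single]

lemma hp_replicate (n : ℕ) : ∀ d t : ℕ, d + t = n → ∀ x : R,
    hp d (List.replicate (t+1) x) = ((d+t).choose t : R) * x ^ d := by
  induction n with
  | zero => intro d t h x
            obtain ⟨rfl, rfl⟩ : d = 0 ∧ t = 0 := by omega
            simp
  | succ n ih =>
    intro d t h x
    cases d with
    | zero => simp
    | succ d =>
      cases t with
      | zero => simp [List.replicate]
      | succ t =>
        rw [List.replicate_succ, hp_cons_succ, ← List.replicate_succ,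
          ih d (t+1) (by omega) x, ih (d+1) t (by omega) x]
        have pas : (d + 1 + (t + 1)).choose (t + 1)
            = (d + (t+1)).choose (t+1) + (d + 1 + t).choose t := by
          have h1 : d + 1 + (t + 1) = (d + t + 1) + 1 := by omega
          have h2 : d + (t+1) = d + t + 1 := by omega
          have h3 : d + 1 + t = d + t + 1 := by omega
          rw [h1, h2, h3, Nat.choose_succ_succ (d+t+1) t, Nat.add_comm]
        rw [pas]
        push_cast
        ring

lemma hz_replicate (i t : ℕ) (x : R) :
    hz ((i : ℤ) - t) (List.replicate (t+1) x) = (i.choose t : R) * x ^ (i - t) := by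
  rcases le_or_gt t i with h | h
  · have : ((i : ℤ) - t) = ((i - t : ℕ) : ℤ) := by omega
    rw [this, hz_coe, hp_replicate (i-t+t) (i-t) t rfl x, Nat.sub_add_cancel h]
  · rw [hz_neg (by omega), Nat.choose_eq_zero_of_lt h]; simp

lemma map_hp (f : R →+* S) : ∀ (d : ℕ) (L : List R), f (hp d L) = hp d (L.map f) := by
  intro d
  induction d using Nat.strong_induction_on with
  | _ d ihd =>
    cases d with
    | zero => intro L; simp
    | succ d =>
      intro L
      induction L with
      | nil => simp
      | cons x L ihL =>
        rw [hp_cons_succ, List.map_cons, hp_cons_succ, map_add, map_mul,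
          ihd d (by omega), ihL, List.map_cons]

lemma map_hz (f : R →+* S) (k : ℤ) (L : List R) : f (hz k L) = hz k (L.map f) := by
  unfold hz; split <;> simp [map_hp]

/-- Newton's forward interpolation identity (exact, with remainder). -/
lemma newton (x : R) (n : ℕ → R) (i : ℕ) (T : ℕ) :
    x ^ i = (∑ t ∈ Finset.range T, (∏ u ∈ Finset.range t, (x - n u)) *
        hz ((i:ℤ) - t) (((List.range (t+1)).reverse).map n))
      + (∏ u ∈ Finset.range T, (x - n u)) *
        hz ((i:ℤ) - T) (x :: ((List.range T).reverse).map n) := by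
  induction T with
  | zero => simp [hz_single]
  | succ T ih =>
    rw [ih]
    have key : hz ((i:ℤ) - T) (x :: ((List.range T).reverse).map n)
        = hz ((i:ℤ) - T) (((List.range (T+1)).reverse).map n)
          + (x - n T) * hz ((i:ℤ) - (T+1)) (x :: ((List.range (T+1)).reverse).map n) := by
      have hrev : ((List.range (T+1)).reverse).map n = n T :: ((List.range T).reverse).map n := by
        rw [List.range_succ, List.reverse_append]; simp
      rw [hrev]
      have := hz_sub ((i:ℤ) - T) x (n T) (((List.range T).reverse).map n)
      have h2 : ((i:ℤ) - T - 1) = ((i:ℤ) - (T+1)) := by push_cast; ring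
      rw [h2] at this
      linear_combination this
    rw [key, Finset.sum_range_succ, Finset.prod_range_succ]
    push_cast
    ring


/-- Stirling numbers of the second kind. -/
def Stir : ℕ → ℕ → ℕ
  | 0, 0 => 1
  | 0, _+1 => 0
  | _+1, 0 => 0
  | n+1, k+1 => (k+1) * Stir n (k+1) + Stir n k

@[simp] lemma Stir_zero_zero : Stir 0 0 = 1 := rfl
@[simp] lemma Stir_zero_succ (k : ℕ) : Stir 0 (k+1) = 0 := rfl
@[simp] lemma Stir_succ_zero (n : ℕ) : Stir (n+1) 0 = 0 := rfl
lemma Stir_succ_succ (n k : ℕ) : Stir (n+1) (k+1) = (k+1) * Stir n (k+1) + Stir n k := rfl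

lemma Stir_eq_zero_of_lt : ∀ {n k : ℕ}, n < k → Stir n k = 0 := by
  intro n
  induction n with
  | zero =>
    intro k h
    match k with
    | k+1 => simp
  | succ n ih =>
    intro k h
    match k with
    | k+1 => rw [Stir_succ_succ, ih (by omega), ih (by omega)]; simp

@[simp] lemma Stir_self : ∀ n, Stir n n = 1 := by
  intro n
  induction n with
  | zero => rfl
  | succ n ih => rw [Stir_succ_succ, ih, Stir_eq_zero_of_lt (by omega)]; ring

lemma mul_descFactorial (i k : ℕ) :
    i * i.descFactorial k = i.descFactorial (k+1) + k * i.descFactorial k := by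
  rcases le_or_gt k i with h | h
  · rw [Nat.descFactorial_succ]
    nlinarith [Nat.sub_add_cancel h]
  · rw [Nat.descFactorial_eq_zero_iff_lt.2 h, Nat.descFactorial_succ,
      Nat.descFactorial_eq_zero_iff_lt.2 h]
    simp

lemma stirling_sum (n i : ℕ) :
    ∑ k ∈ Finset.range (n+1), Stir n k * i.descFactorial k = i ^ n := by
  induction n with
  | zero => simp
  | succ n ih =>
    have expand : ∑ k ∈ Finset.range (n+2), Stir (n+1) k * i.descFactorial k
        = (∑ k ∈ Finset.range (n+1), (k+1) * Stir n (k+1) * i.descFactorial (k+1))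
          + ∑ k ∈ Finset.range (n+1), Stir n k * i.descFactorial (k+1) := by
      rw [Finset.sum_range_succ' (fun k => Stir (n+1) k * i.descFactorial k) (n+1)]
      simp only [Stir_succ_succ, Stir_succ_zero, Nat.zero_mul, Nat.add_zero]
      rw [← Finset.sum_add_distrib]
      apply Finset.sum_congr rfl
      intro k _
      ring

    have e2 : ∑ k ∈ Finset.range (n+1), (k+1) * Stir n (k+1) * i.descFactorial (k+1)
        = ∑ k ∈ Finset.range (n+1), k * Stir n k * i.descFactorial k := by
      rw [Finset.sum_range_succ (fun k => (k+1) * Stir n (k+1) * i.descFactorial (k+1)) n,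
        Stir_eq_zero_of_lt (Nat.lt_succ_self n),
        Finset.sum_range_succ' (fun k => k * Stir n k * i.descFactorial k) n]
      simp
    have e3 : i ^ (n+1) = (∑ k ∈ Finset.range (n+1), Stir n k * i.descFactorial (k+1))
        + ∑ k ∈ Finset.range (n+1), k * Stir n k * i.descFactorial k := by
      rw [pow_succ, mul_comm, ← ih, Finset.mul_sum, ← Finset.sum_add_distrib]
      apply Finset.sum_congr rfl
      intro k _
      have h := mul_descFactorial i k
      calc i * (Stir n k * i.descFactorial k) = Stir n k * (i * i.descFactorial k) := by ring
        _ = Stir n k * i.descFactorial (k+1) + k * Stir n k * i.descFactorial k := by rw [h]; ring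
    rw [expand, e2, e3]
    ring

lemma sum_range_id_choose (n : ℕ) : ∑ j ∈ Finset.range n, j = n.choose 2 := by
  have h1 := Finset.sum_range_id_mul_two n
  rw [Nat.choose_two_right]
  omega

open Finset

variable {s : ℕ} {m : Fin s → ℕ} {r : ℕ} {b : Fin r → Fin s} {o : Fin r → ℕ}

/-- starting index of block `l` -/
def bstart (m : Fin s → ℕ) (l : Fin s) : ℕ := ∑ t ∈ Finset.univ.filter (fun t => t < l), m t

def Hbo (m : Fin s → ℕ) (b : Fin r → Fin s) (o : Fin r → ℕ) : Prop :=
  ∀ q : Fin r,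
    (q : ℕ) = (∑ l ∈ Finset.univ.filter (fun l => l < b q), m l) + o q ∧ o q < m (b q)

lemma q_eq (hbo : Hbo m b o) (q : Fin r) : (q : ℕ) = bstart m (b q) + o q := (hbo q).1

lemma bstart_mono {l l' : Fin s} (h : l < l') : bstart m l + m l ≤ bstart m l' := by
  have hsub : insert l (Finset.univ.filter (fun t => t < l)) ⊆
      Finset.univ.filter (fun t => t < l') := by
    intro t ht
    rcases Finset.mem_insert.1 ht with rfl | ht
    · simp [h]
    · simp only [Finset.mem_filter, Finset.mem_univ, true_and] at ht ⊢
      exact lt_trans ht h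
  have hnotmem : l ∉ Finset.univ.filter (fun t => t < l) := by simp
  calc bstart m l + m l = ∑ t ∈ insert l (Finset.univ.filter (fun t => t < l)), m t := by
        rw [Finset.sum_insert hnotmem]; exact Nat.add_comm _ _
    _ ≤ bstart m l' := Finset.sum_le_sum_of_subset hsub

lemma eq_of_bo (hbo : Hbo m b o) {p q : Fin r} (h1 : b p = b q) (h2 : o p = o q) : p = q := by
  have e1 := q_eq hbo p
  have e2 := q_eq hbo q
  have e3 : bstart m (b p) = bstart m (b q) := by rw [h1]
  apply Fin.ext
  omega

lemma lt_of_blt (hbo : Hbo m b o) {p q : Fin r} (h : b p < b q) : p < q := by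
  have h1 := q_eq hbo p
  have h2 := q_eq hbo q
  have h3 := (hbo p).2
  have h4 := bstart_mono (m := m) h
  rw [Fin.lt_def]
  omega

lemma blt_of_lt (hbo : Hbo m b o) {p q : Fin r} (h : p < q) (hne : b p ≠ b q) : b p < b q := by
  rcases lt_trichotomy (b p) (b q) with h' | h' | h'
  · exact h'
  · exact absurd h' hne
  · exact absurd (lt_of_blt hbo h') (by omega)

lemma lt_iff_o_lt (hbo : Hbo m b o) {p q : Fin r} (h : b p = b q) : p < q ↔ o p < o q := by
  have h1 := q_eq hbo p
  have h2 := q_eq hbo q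
  have e3 : bstart m (b p) = bstart m (b q) := by rw [h]
  rw [Fin.lt_def]
  omega

lemma bo_bijective (hr : r = ∑ l, m l) (hbo : Hbo m b o) :
    Function.Bijective (fun q : Fin r => (⟨b q, ⟨o q, (hbo q).2⟩⟩ : Σ l, Fin (m l))) := by
  rw [Fintype.bijective_iff_injective_and_card]
  constructor
  · intro p q hpq
    have h1 : b p = b q := congrArg Sigma.fst hpq
    have h2 : o p = o q := congrArg (fun x : Σ l, Fin (m l) => (x.2 : ℕ)) hpq
    exact eq_of_bo hbo h1 h2
  · simp [Fintype.card_sigma, hr]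

lemma exists_bo (hr : r = ∑ l, m l) (hbo : Hbo m b o) (l : Fin s) {u : ℕ} (hu : u < m l) :
    ∃ p : Fin r, b p = l ∧ o p = u := by
  obtain ⟨p, hp⟩ := (bo_bijective hr hbo).2 ⟨l, ⟨u, hu⟩⟩
  exact ⟨p, congrArg Sigma.fst hp, congrArg (fun x : Σ l, Fin (m l) => (x.2 : ℕ)) hp⟩

lemma prod_block_split (hr : r = ∑ l, m l) (hbo : Hbo m b o)
    {M : Type*} [CommMonoid M] (g : Fin s → ℕ → M) :
    ∏ q : Fin r, g (b q) (o q) = ∏ l : Fin s, ∏ j ∈ Finset.range (m l), g l j := by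
  rw [Finset.prod_sigma' Finset.univ (fun l => Finset.range (m l)) g]
  apply Finset.prod_bij (fun (q : Fin r) (_ : q ∈ Finset.univ) => (⟨b q, o q⟩ : Σ _ : Fin s, ℕ))
  · intro q _
    simp only [Finset.mem_sigma, Finset.mem_univ, true_and, Finset.mem_range]
    exact (hbo q).2
  · intro p _ q _ hpq
    exact eq_of_bo hbo (congrArg Sigma.fst hpq) (congrArg Sigma.snd hpq)
  · intro x hx
    simp only [Finset.mem_sigma, Finset.mem_univ, true_and, Finset.mem_range] at hx
    obtain ⟨p, hp1, hp2⟩ := exists_bo hr hbo x.1 hx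
    exact ⟨p, Finset.mem_univ p, by rw [hp1, hp2]⟩
  · intro q _; rfl

lemma sum_block_split (hr : r = ∑ l, m l) (hbo : Hbo m b o)
    {M : Type*} [AddCommMonoid M] (g : Fin s → ℕ → M) :
    ∑ q : Fin r, g (b q) (o q) = ∑ l : Fin s, ∑ j ∈ Finset.range (m l), g l j := by
  rw [Finset.sum_sigma' Finset.univ (fun l => Finset.range (m l)) g]
  apply Finset.sum_bij (fun (q : Fin r) (_ : q ∈ Finset.univ) => (⟨b q, o q⟩ : Σ _ : Fin s, ℕ))
  · intro q _
    simp only [Finset.mem_sigma, Finset.mem_univ, true_and, Finset.mem_range]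
    exact (hbo q).2
  · intro p _ q _ hpq
    exact eq_of_bo hbo (congrArg Sigma.fst hpq) (congrArg Sigma.snd hpq)
  · intro x hx
    simp only [Finset.mem_sigma, Finset.mem_univ, true_and, Finset.mem_range] at hx
    obtain ⟨p, hp1, hp2⟩ := exists_bo hr hbo x.1 hx
    exact ⟨p, Finset.mem_univ p, by rw [hp1, hp2]⟩
  · intro q _; rfl

lemma block_card (hr : r = ∑ l, m l) (hbo : Hbo m b o) (l : Fin s) :
    (Finset.univ.filter (fun q : Fin r => b q = l)).card = m l := by
  rw [← Finset.card_range (m l)]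
  apply Finset.card_bij (fun (q : Fin r) (_ : q ∈ Finset.univ.filter (fun q => b q = l)) => o q)
  · intro q hq
    simp only [Finset.mem_filter] at hq
    simp only [Finset.mem_range]
    rw [← hq.2]; exact (hbo q).2
  · intro p hp q hq hpq
    simp only [Finset.mem_filter] at hp hq
    exact eq_of_bo hbo (hp.2.trans hq.2.symm) hpq
  · intro u hu
    simp only [Finset.mem_range] at hu
    obtain ⟨p, hp1, hp2⟩ := exists_bo hr hbo l hu
    exact ⟨p, by simp [hp1], hp2⟩

/-- nested `Ioi` products over `Fin n` as a product over the set of ordered pairs -/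
lemma prod_Ioi_pairs {n : ℕ} {M : Type*} [CommMonoid M] (f : Fin n → Fin n → M) :
    ∏ i : Fin n, ∏ j ∈ Finset.Ioi i, f i j
      = ∏ z ∈ Finset.univ.filter (fun z : Fin n × Fin n => z.1 < z.2), f z.1 z.2 := by
  rw [Finset.prod_sigma' Finset.univ (fun i => Finset.Ioi i) f]
  apply Finset.prod_bij (fun (x : Σ _ : Fin n, Fin n)
    (_ : x ∈ Finset.univ.sigma (fun i => Finset.Ioi i)) => (x.1, x.2))
  · intro x hx
    simp only [Finset.mem_sigma, Finset.mem_Ioi] at hx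
    simp [hx.2]
  · intro x _ y _ hxy
    rw [Prod.mk.injEq] at hxy
    exact Sigma.ext hxy.1 (heq_of_eq hxy.2)
  · intro z hz
    simp only [Finset.mem_filter, Finset.mem_univ, true_and] at hz
    exact ⟨⟨z.1, z.2⟩, by simp [Finset.mem_sigma, hz], rfl⟩
  · intro x _; rfl


-- part 5: generic factorization over a commutative ring
section Core
variable {s : ℕ} {m : Fin s → ℕ} {r : ℕ} {b : Fin r → Fin s} {o : Fin r → ℕ}
variable {R : Type*} [CommRing R]

/-- the node attached to block `l`, offset `u` (sum over a singleton set). -/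
def ndf (Y : Fin r → R) (b : Fin r → Fin s) (o : Fin r → ℕ) (l : Fin s) (u : ℕ) : R :=
  ∑ p ∈ Finset.univ.filter (fun p => b p = l ∧ o p = u), Y p

lemma nd_eq (hbo : Hbo m b o) (Y : Fin r → R) {p : Fin r} {l : Fin s} {u : ℕ}
    (h1 : b p = l) (h2 : o p = u) : ndf Y b o l u = Y p := by
  have hset : Finset.univ.filter (fun p' : Fin r => b p' = l ∧ o p' = u) = {p} := by
    ext p'
    simp only [Finset.mem_filter, Finset.mem_univ, true_and, Finset.mem_singleton]
    constructor
    · rintro ⟨a1, a2⟩; exact eq_of_bo hbo (a1.trans h1.symm) (a2.trans h2.symm)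
    · rintro rfl; exact ⟨h1, h2⟩
  rw [ndf, hset, Finset.sum_singleton]

/-- The matrix of "divided difference" columns. -/
def Nmat (Y : Fin r → R) (b : Fin r → Fin s) (o : Fin r → ℕ) : Matrix (Fin r) (Fin r) R :=
  Matrix.of fun i q : Fin r =>
    hz ((i : ℤ) - o q) (((List.range (o q + 1)).reverse).map (ndf Y b o (b q)))

/-- The Newton-interpolation transition matrix. -/
def U1mat (Y : Fin r → R) (b : Fin r → Fin s) (o : Fin r → ℕ) : Matrix (Fin r) (Fin r) R :=
  Matrix.of fun p q : Fin r =>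
    if b p = b q ∧ o p ≤ o q then ∏ u ∈ Finset.range (o p), (Y q - ndf Y b o (b q) u) else 0

lemma vmat_factor (hr : r = ∑ l, m l) (hbo : Hbo m b o) (Y : Fin r → R) :
    (Matrix.of fun i q : Fin r => Y q ^ (i : ℕ)) = Nmat Y b o * U1mat Y b o := by
  ext i q
  rw [Matrix.mul_apply]
  simp only [Nmat, U1mat, Matrix.of_apply]
  have step1 : ∑ p : Fin r,
      hz ((i : ℤ) - o p) (((List.range (o p + 1)).reverse).map (ndf Y b o (b p))) *
        (if b p = b q ∧ o p ≤ o q then ∏ u ∈ Finset.range (o p), (Y q - ndf Y b o (b q) u) else 0)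
      = ∑ l : Fin s, ∑ j ∈ Finset.range (m l),
          (hz ((i : ℤ) - j) (((List.range (j + 1)).reverse).map (ndf Y b o l)) *
            (if l = b q ∧ j ≤ o q then ∏ u ∈ Finset.range j, (Y q - ndf Y b o (b q) u) else 0)) :=
    sum_block_split hr hbo (fun l j =>
      hz ((i : ℤ) - j) (((List.range (j + 1)).reverse).map (ndf Y b o l)) *
        (if l = b q ∧ j ≤ o q then ∏ u ∈ Finset.range j, (Y q - ndf Y b o (b q) u) else 0))
  rw [step1]
  rw [Finset.sum_eq_single_of_mem (b q) (Finset.mem_univ _) (by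
    intro l _ hl
    apply Finset.sum_eq_zero
    intro j _
    rw [if_neg (by tauto)]
    ring)]
  have step2 : ∑ j ∈ Finset.range (m (b q)),
      (hz ((i : ℤ) - j) (((List.range (j + 1)).reverse).map (ndf Y b o (b q))) *
        (if b q = b q ∧ j ≤ o q then ∏ u ∈ Finset.range j, (Y q - ndf Y b o (b q) u) else 0))
      = ∑ j ∈ Finset.range (o q + 1),
          (hz ((i : ℤ) - j) (((List.range (j + 1)).reverse).map (ndf Y b o (b q))) *
            ∏ u ∈ Finset.range j, (Y q - ndf Y b o (b q) u)) := by
    rw [← Finset.sum_subset (Finset.range_subset_range.2 (hbo q).2)]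
    · apply Finset.sum_congr rfl
      intro j hj
      rw [if_pos ⟨rfl, by simpa using Nat.lt_succ_iff.1 (Finset.mem_range.1 hj)⟩]
    · intro j _ hj
      rw [if_neg (by simp only [Finset.mem_range, Nat.lt_succ_iff] at hj; tauto)]
      ring
  rw [step2]
  -- Newton's identity
  have hN := newton (Y q) (ndf Y b o (b q)) i (o q)
  have hx : Y q = ndf Y b o (b q) (o q) := (nd_eq hbo Y rfl rfl).symm
  have hlist : (Y q :: ((List.range (o q)).reverse).map (ndf Y b o (b q)))
      = ((List.range (o q + 1)).reverse).map (ndf Y b o (b q)) := by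
    rw [List.range_succ, List.reverse_append]
    simp [hx]
  rw [hlist] at hN
  rw [hN, Finset.sum_range_succ]
  congr 1
  · apply Finset.sum_congr rfl
    intro t _
    ring
  · ring

lemma U1_triangular (hbo : Hbo m b o) (Y : Fin r → R) :
    Matrix.BlockTriangular (U1mat Y b o) id := by
  intro p q h
  simp only [id_eq] at h
  simp only [U1mat, Matrix.of_apply]
  rw [if_neg]
  rintro ⟨h1, h2⟩
  have := (lt_iff_o_lt hbo h1.symm).1 h
  omega

lemma det_U1 (hbo : Hbo m b o) (Y : Fin r → R) :
    (U1mat Y b o).det = ∏ q : Fin r, ∏ u ∈ Finset.range (o q), (Y q - ndf Y b o (b q) u) := by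
  rw [Matrix.det_of_upperTriangular (U1_triangular hbo Y)]
  apply Finset.prod_congr rfl
  intro q _
  simp [U1mat]

lemma within_prod (hr : r = ∑ l, m l) (hbo : Hbo m b o) (Y : Fin r → R) :
    ∏ z ∈ Finset.univ.filter (fun z : Fin r × Fin r => z.1 < z.2 ∧ b z.1 = b z.2),
        (Y z.2 - Y z.1)
      = ∏ q : Fin r, ∏ u ∈ Finset.range (o q), (Y q - ndf Y b o (b q) u) := by
  rw [Finset.prod_sigma' Finset.univ (fun q : Fin r => Finset.range (o q))
    (fun q u => Y q - ndf Y b o (b q) u)]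
  apply Finset.prod_bij (fun (z : Fin r × Fin r)
    (_ : z ∈ Finset.univ.filter (fun z : Fin r × Fin r => z.1 < z.2 ∧ b z.1 = b z.2)) =>
      (⟨z.2, o z.1⟩ : Σ _ : Fin r, ℕ))
  · intro z hz
    simp only [Finset.mem_filter, Finset.mem_univ, true_and] at hz
    simp only [Finset.mem_sigma, Finset.mem_univ, true_and, Finset.mem_range]
    exact (lt_iff_o_lt hbo hz.2).1 hz.1
  · intro z hz w hw hzw
    simp only [Finset.mem_filter, Finset.mem_univ, true_and] at hz hw
    have h2 : z.2 = w.2 := congrArg Sigma.fst hzw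
    have h1 : o z.1 = o w.1 := congrArg Sigma.snd hzw
    have hb : b z.1 = b w.1 := by rw [hz.2, hw.2, h2]
    exact Prod.ext (eq_of_bo hbo hb h1) h2
  · intro x hx
    simp only [Finset.mem_sigma, Finset.mem_univ, true_and, Finset.mem_range] at hx
    obtain ⟨p, hp1, hp2⟩ := exists_bo hr hbo (b x.1) (lt_trans hx (hbo x.1).2)
    refine ⟨(p, x.1), ?_, ?_⟩
    · simp only [Finset.mem_filter, Finset.mem_univ, true_and]
      exact ⟨(lt_iff_o_lt hbo hp1).2 (by omega), hp1⟩
    · simp [hp2]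
  · intro z hz
    simp only [Finset.mem_filter, Finset.mem_univ, true_and] at hz
    rw [nd_eq hbo Y hz.2 rfl]

end Core

section PSide
variable {s : ℕ} {m : Fin s → ℕ} {r : ℕ} {b : Fin r → Fin s} {o : Fin r → ℕ}

lemma detN_eq_cross (hr : r = ∑ l, m l) (hbo : Hbo m b o) :
    (Nmat (fun p : Fin r => (MvPolynomial.X p : MvPolynomial (Fin r) ℤ)) b o).det
      = ∏ z ∈ Finset.univ.filter (fun z : Fin r × Fin r => b z.1 < b z.2),
          (MvPolynomial.X z.2 - MvPolynomial.X z.1) := by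
  set Y : Fin r → MvPolynomial (Fin r) ℤ := fun p => MvPolynomial.X p with hY
  set D : MvPolynomial (Fin r) ℤ :=
    ∏ q : Fin r, ∏ u ∈ Finset.range (o q), (Y q - ndf Y b o (b q) u) with hD
  have hdetV : (Matrix.of fun i q : Fin r => Y q ^ (i : ℕ)).det = (Nmat Y b o).det * D := by
    rw [vmat_factor hr hbo Y, Matrix.det_mul, det_U1 hbo Y]
  have hvand : (Matrix.of fun i q : Fin r => Y q ^ (i : ℕ)).det
      = ∏ z ∈ Finset.univ.filter (fun z : Fin r × Fin r => z.1 < z.2), (Y z.2 - Y z.1) := by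
    have e : (Matrix.of fun i q : Fin r => Y q ^ (i : ℕ)) = (Matrix.vandermonde Y).transpose := rfl
    rw [e, Matrix.det_transpose, Matrix.det_vandermonde, prod_Ioi_pairs]
  have hsplit : ∏ z ∈ Finset.univ.filter (fun z : Fin r × Fin r => z.1 < z.2), (Y z.2 - Y z.1)
      = D * ∏ z ∈ Finset.univ.filter (fun z : Fin r × Fin r => b z.1 < b z.2),
          (Y z.2 - Y z.1) := by
    rw [← Finset.prod_filter_mul_prod_filter_not
      (Finset.univ.filter (fun z : Fin r × Fin r => z.1 < z.2))
      (fun z => b z.1 = b z.2) (fun z => Y z.2 - Y z.1), Finset.filter_filter,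
      Finset.filter_filter]
    congr 1
    · rw [hD]; exact within_prod hr hbo Y
    · apply Finset.prod_congr _ (fun _ _ => rfl)
      apply Finset.filter_congr
      intro z _
      constructor
      · rintro ⟨h1, h2⟩; exact blt_of_lt hbo h1 h2
      · intro h; exact ⟨lt_of_blt hbo h, ne_of_lt h⟩
  have hDne : D ≠ 0 := by
    rw [hD]
    rw [Finset.prod_ne_zero_iff]
    intro q _
    rw [Finset.prod_ne_zero_iff]
    intro u hu
    obtain ⟨p, hp1, hp2⟩ := exists_bo hr hbo (b q)
      (lt_trans (Finset.mem_range.1 hu) (hbo q).2)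
    rw [nd_eq hbo Y hp1 hp2]
    have hpq : p ≠ q := by
      intro h
      rw [h] at hp2
      exact absurd (Finset.mem_range.1 hu) (by omega)
    exact sub_ne_zero.2 (MvPolynomial.X_injective.ne (Ne.symm hpq))
  have := hdetV.symm.trans (hvand.trans hsplit)
  -- (Nmat).det * D = D * cross
  rw [mul_comm D _] at this
  exact mul_right_cancel₀ hDne this

variable {R : Type*} [CommRing R]

lemma det_conf (hr : r = ∑ l, m l) (hbo : Hbo m b o) (X : Fin s → R) :
    (Matrix.of fun i q : Fin r => ((i : ℕ).choose (o q) : R) * X (b q) ^ ((i : ℕ) - o q)).det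
      = ∏ z ∈ Finset.univ.filter (fun z : Fin r × Fin r => b z.1 < b z.2),
          (X (b z.2) - X (b z.1)) := by
  set φ : MvPolynomial (Fin r) ℤ →+* R :=
    MvPolynomial.eval₂Hom (Int.castRingHom R) (fun p : Fin r => X (b p)) with hφ
  have hXp : ∀ p : Fin r, φ (MvPolynomial.X p) = X (b p) := by
    intro p; simp [hφ]
  have hmap := congrArg φ (detN_eq_cross (m := m) (b := b) (o := o) hr hbo)
  rw [RingHom.map_det] at hmap
  rw [map_prod] at hmap
  have hL : φ.mapMatrix (Nmat (fun p : Fin r => (MvPolynomial.X p : MvPolynomial (Fin r) ℤ)) b o)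
      = Matrix.of fun i q : Fin r =>
          ((i : ℕ).choose (o q) : R) * X (b q) ^ ((i : ℕ) - o q) := by
    ext i q
    simp only [RingHom.mapMatrix_apply, Matrix.map_apply, Nmat, Matrix.of_apply]
    rw [map_hz]
    have hrep : (((List.range (o q + 1)).reverse).map
          (ndf (fun p : Fin r => (MvPolynomial.X p : MvPolynomial (Fin r) ℤ)) b o (b q))).map φ
        = List.replicate (o q + 1) (X (b q)) := by
      rw [List.map_map, List.eq_replicate_iff]
      constructor
      · simp
      · intro x hx
        simp only [List.mem_map, List.mem_reverse, List.mem_range] at hx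
        obtain ⟨u, hu, rfl⟩ := hx
        have hu' : u < m (b q) := lt_of_lt_of_le hu (hbo q).2
        obtain ⟨p, hp1, hp2⟩ := exists_bo hr hbo (b q) hu'
        simp only [Function.comp_apply]
        rw [nd_eq hbo _ hp1 hp2, hXp, hp1]
    rw [hrep, hz_replicate]
  rw [hL] at hmap
  rw [hmap]
  apply Finset.prod_congr rfl
  intro z _
  rw [map_sub, hXp, hXp]

lemma cross_regroup (hr : r = ∑ l, m l) (hbo : Hbo m b o) (X : Fin s → R) :
    ∏ z ∈ Finset.univ.filter (fun z : Fin r × Fin r => b z.1 < b z.2),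
        (X (b z.2) - X (b z.1))
      = ∏ l : Fin s, ∏ l' ∈ Finset.Ioi l, (X l' - X l) ^ (m l * m l') := by
  rw [prod_Ioi_pairs (fun l l' => (X l' - X l) ^ (m l * m l'))]
  rw [← Finset.prod_fiberwise_of_maps_to (g := fun z : Fin r × Fin r => (b z.1, b z.2))
    (t := Finset.univ.filter (fun w : Fin s × Fin s => w.1 < w.2))
    (by intro z hz
        simp only [Finset.mem_filter, Finset.mem_univ, true_and] at hz ⊢
        exact hz)
    (fun z => X (b z.2) - X (b z.1))]
  apply Finset.prod_congr rfl
  intro w hw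
  simp only [Finset.mem_filter, Finset.mem_univ, true_and] at hw
  have hfib : (Finset.univ.filter (fun z : Fin r × Fin r => b z.1 < b z.2)).filter
        (fun z => (b z.1, b z.2) = w)
      = (Finset.univ.filter (fun p : Fin r => b p = w.1)) ×ˢ
          (Finset.univ.filter (fun p : Fin r => b p = w.2)) := by
    ext z
    simp only [Finset.mem_filter, Finset.mem_univ, true_and, Finset.mem_product, Prod.ext_iff]
    constructor
    · rintro ⟨_, h2, h3⟩; exact ⟨h2, h3⟩
    · rintro ⟨h2, h3⟩; exact ⟨by rw [h2, h3]; exact hw, h2, h3⟩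
  rw [hfib]
  have hconst : ∀ z ∈ (Finset.univ.filter (fun p : Fin r => b p = w.1)) ×ˢ
      (Finset.univ.filter (fun p : Fin r => b p = w.2)),
      X (b z.2) - X (b z.1) = X w.2 - X w.1 := by
    intro z hz
    simp only [Finset.mem_product, Finset.mem_filter, Finset.mem_univ, true_and] at hz
    rw [hz.1, hz.2]
  rw [Finset.prod_congr rfl hconst, Finset.prod_const, Finset.card_product,
    block_card hr hbo, block_card hr hbo]

end PSide

end FH


open FH



/-- The Flowe–Harris generalized (confluent) Vandermonde determinant evaluation.
The `r × r` matrix is the horizontal concatenation of blocks `B_{m_l}(X_l)` whose `(i,j)` entry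
is `i^j · X_l^i` (convention `0^0 = 1`); columns are grouped into blocks by the block function
`b` and offset function `o`. -/
theorem flowe_harris_generalized_vandermonde
    {R : Type*} [CommRing R]
    (s : ℕ) (m : Fin s → ℕ) (hm : ∀ l, 0 < m l)
    (r : ℕ) (hr : r = ∑ l, m l) (X : Fin s → R)
    (b : Fin r → Fin s) (o : Fin r → ℕ)
    (hbo : ∀ q : Fin r,
      (q : ℕ) = (∑ l ∈ Finset.univ.filter (fun l => l < b q), m l) + o q ∧ o q < m (b q)) :
    Matrix.det (Matrix.of fun i q : Fin r => ((i : ℕ) : R) ^ o q * X (b q) ^ (i : ℕ)) =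
      (∏ l, ∏ j ∈ Finset.range (m l), (Nat.factorial j : R)) *
        (∏ l, X l ^ (m l).choose 2) *
        ∏ i : Fin s, ∏ j ∈ Finset.Ioi i, (X j - X i) ^ (m i * m j) := by
  classical
  have hbo' : Hbo m b o := hbo
  set Cf : Matrix (Fin r) (Fin r) R :=
    Matrix.of (fun i q : Fin r => ((i : ℕ).choose (o q) : R) * X (b q) ^ ((i : ℕ) - o q))
    with hCf
  set U2 : Matrix (Fin r) (Fin r) R :=
    Matrix.of (fun p q : Fin r => if b p = b q ∧ o p ≤ o q
      then ((Stir (o q) (o p) * (o p).factorial : ℕ) : R) * X (b q) ^ (o p) else 0) with hU2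
  -- factorization
  have hfact : (Matrix.of fun i q : Fin r => ((i : ℕ) : R) ^ o q * X (b q) ^ (i : ℕ))
      = Cf * U2 := by
    ext i q
    rw [Matrix.mul_apply]
    simp only [hCf, hU2, Matrix.of_apply]
    have step1 : ∑ p : Fin r,
        ((i : ℕ).choose (o p) : R) * X (b p) ^ ((i : ℕ) - o p) *
          (if b p = b q ∧ o p ≤ o q
            then ((Stir (o q) (o p) * (o p).factorial : ℕ) : R) * X (b q) ^ (o p) else 0)
        = ∑ l : Fin s, ∑ j ∈ Finset.range (m l),
            (((i : ℕ).choose j : R) * X l ^ ((i : ℕ) - j) *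
              (if l = b q ∧ j ≤ o q
                then ((Stir (o q) j * j.factorial : ℕ) : R) * X (b q) ^ j else 0)) :=
      sum_block_split hr hbo' (fun l j =>
        ((i : ℕ).choose j : R) * X l ^ ((i : ℕ) - j) *
          (if l = b q ∧ j ≤ o q
            then ((Stir (o q) j * j.factorial : ℕ) : R) * X (b q) ^ j else 0))
    rw [step1]
    rw [Finset.sum_eq_single_of_mem (b q) (Finset.mem_univ _) (by
      intro l _ hl
      apply Finset.sum_eq_zero
      intro j _
      rw [if_neg (by tauto)]
      ring)]
    have step2 : ∑ j ∈ Finset.range (m (b q)),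
        (((i : ℕ).choose j : R) * X (b q) ^ ((i : ℕ) - j) *
          (if b q = b q ∧ j ≤ o q
            then ((Stir (o q) j * j.factorial : ℕ) : R) * X (b q) ^ j else 0))
        = ∑ j ∈ Finset.range (o q + 1),
            (((i : ℕ).choose j : R) * X (b q) ^ ((i : ℕ) - j) *
              (((Stir (o q) j * j.factorial : ℕ) : R) * X (b q) ^ j)) := by
      rw [← Finset.sum_subset (Finset.range_subset_range.2 (hbo q).2)]
      · apply Finset.sum_congr rfl
        intro j hj
        rw [if_pos ⟨rfl, by simpa using Nat.lt_succ_iff.1 (Finset.mem_range.1 hj)⟩]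
      · intro j _ hj
        rw [if_neg (by simp only [Finset.mem_range, Nat.lt_succ_iff] at hj; tauto)]
        ring
    rw [step2]
    have step3 : ∑ j ∈ Finset.range (o q + 1),
        (((i : ℕ).choose j : R) * X (b q) ^ ((i : ℕ) - j) *
          (((Stir (o q) j * j.factorial : ℕ) : R) * X (b q) ^ j))
        = ∑ j ∈ Finset.range (o q + 1),
            ((Stir (o q) j * ((i : ℕ).descFactorial j) : ℕ) : R) * X (b q) ^ (i : ℕ) := by
      apply Finset.sum_congr rfl
      intro j _
      rw [Nat.descFactorial_eq_factorial_mul_choose]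
      rcases le_or_gt j (i : ℕ) with h | h
      · have hpow : X (b q) ^ ((i : ℕ) - j) * X (b q) ^ j = X (b q) ^ (i : ℕ) := by
          rw [← pow_add, Nat.sub_add_cancel h]
        push_cast
        rw [← hpow]
        ring
      · rw [Nat.choose_eq_zero_of_lt h]
        push_cast
        ring
    rw [step3, ← Finset.sum_mul, ← Nat.cast_sum]
    have step4 : ∑ j ∈ Finset.range (o q + 1), Stir (o q) j * (i : ℕ).descFactorial j
        = (i : ℕ) ^ (o q) := stirling_sum (o q) (i : ℕ)
    rw [step4]
    push_cast
    ring
  -- triangularity of U2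
  have htri : U2.BlockTriangular id := by
    intro p q h
    simp only [id_eq] at h
    simp only [hU2, Matrix.of_apply]
    rw [if_neg]
    rintro ⟨h1, h2⟩
    have := (lt_iff_o_lt hbo' h1.symm).1 h
    omega
  have hdetU2 : U2.det
      = (∏ l, ∏ j ∈ Finset.range (m l), (Nat.factorial j : R)) *
          ∏ l, X l ^ (m l).choose 2 := by
    rw [Matrix.det_of_upperTriangular htri]
    have hdiag : ∀ q : Fin r, U2 q q = (Nat.factorial (o q) : R) * X (b q) ^ (o q) := by
      intro q
      simp [hU2]
    rw [Finset.prod_congr rfl (fun q _ => hdiag q)]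
    rw [prod_block_split hr hbo' (fun l j => (Nat.factorial j : R) * X l ^ j)]
    rw [← Finset.prod_mul_distrib]
    apply Finset.prod_congr rfl
    intro l _
    rw [Finset.prod_mul_distrib, Finset.prod_pow_eq_pow_sum, sum_range_id_choose]
  rw [hfact, Matrix.det_mul, hCf, det_conf hr hbo' X, cross_regroup hr hbo' X, hdetU2]
  ring
end

section
/- Let F be a field of characteristic zero and let X_n^{(k)}, k = 0,…,r−1, be the impulse sequences of a non-degenerate linear recurrence of order r whose minimal polynomial has distinct roots α_1,…,α_s with multiplicities m_1,…,m_s (Σ m_l = r). Then for every n ≥ 1, the (r−1) × (r−1) determinant D = det( X_{hn}^{(k)} )_{h=1,…,r−1; k=1,…,r−1} equals n^{Σ_{l=1}^{s} C(m_l,2)} · ∏_{l=1}^{s} α_l^{C(m_l,2)(n−1)} · ∏_{1 ≤ i < j ≤ s} ((α_j^n − α_i^n)/(α_j − α_i))^{m_i m_j}. -/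
/-!
Write `p = ∏ (X - α_l) ^ m_l`. The impulse sequence `X^{(k)}_N` is the `k`-th coefficient of
`X ^ N mod p`, so `D` is the `(0, 0)`-minor of `A = (coeff_k (X ^ (h n) mod p))_{h, k < r}`, whose
row `0` is `e_0`. Multiplying by the confluent Vandermonde matrix `V(α)` (Taylor coefficients of
the `X ^ j` at each `α_l` up to order `m_l`) turns `A` into the Taylor data of the `X ^ (h n)`,
which does not see the reduction mod `p`. As `X ^ (h n) = (X ^ h) ∘ X ^ n`, the Taylor
coefficients of a composite with `X ^ n` at `α` are a triangular transform, with diagonal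
`(n α ^ (n - 1)) ^ t`, of those at `α ^ n`. Hence
`det V(α) · det A = ∏ (n α_l ^ (n - 1)) ^ C(m_l, 2) · det V(α ^ n)`, and the confluent
Vandermonde determinant `∏_{i<j} (β_j - β_i) ^ (m_i m_j)` finishes the computation.
-/

open Polynomial Finset Matrix

section Recurrence

variable {R : Type*} [CommRing R] {p : R[X]}

theorem sum_coeff_mul_coeff_X_pow_add_modByMonic (hp : p.Monic) (N k : ℕ) :
    ∑ i ∈ range (p.natDegree + 1), p.coeff i * (X ^ (N + i) %ₘ p).coeff k = 0 := by
  have hsum :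
      ∑ i ∈ range (p.natDegree + 1), p.coeff i • (X ^ (N + i) : R[X]) = X ^ N * p := by
    conv_rhs => rw [p.as_sum_range' _ (Nat.lt_succ_self _), mul_sum]
    refine sum_congr rfl fun i _ => ?_
    rw [← C_mul_X_pow_eq_monomial, smul_eq_C_mul, pow_add]
    ring
  have hzero := congrArg (fun q => (modByMonicHom p q).coeff k) hsum
  simp only [map_sum, map_smul, finsetSum_coeff, coeff_smul, smul_eq_mul, modByMonicHom_apply,
    (modByMonic_eq_zero_iff_dvd hp).2 (dvd_mul_left p _), coeff_zero] at hzero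
  exact hzero

theorem eq_of_recurrence (hp : p.Monic) {u v : ℕ → R}
    (hu : ∀ N, ∑ i ∈ range (p.natDegree + 1), p.coeff i * u (N + i) = 0)
    (hv : ∀ N, ∑ i ∈ range (p.natDegree + 1), p.coeff i * v (N + i) = 0)
    (hinit : ∀ j < p.natDegree, u j = v j) : u = v := by
  funext N
  induction N using Nat.strong_induction_on with
  | _ N ih =>
  obtain hN | hN := lt_or_ge N p.natDegree
  · exact hinit N hN
  obtain ⟨M, rfl⟩ := Nat.exists_eq_add_of_le' hN
  have hu' := hu M
  have hv' := hv M
  rw [sum_range_succ, hp.coeff_natDegree, one_mul] at hu' hv'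
  have hlow : ∑ i ∈ range p.natDegree, p.coeff i * u (M + i)
      = ∑ i ∈ range p.natDegree, p.coeff i * v (M + i) :=
    sum_congr rfl fun i hi => by rw [ih _ (by simp only [mem_range] at hi; omega)]
  linear_combination hu' - hv' - hlow

theorem eq_coeff_X_pow_modByMonic_of_recurrence (hp : p.Monic) {u : ℕ → R} {k : ℕ}
    (hu : ∀ N, ∑ i ∈ range (p.natDegree + 1), p.coeff i * u (N + i) = 0)
    (hinit : ∀ j < p.natDegree, u j = if j = k then 1 else 0) (N : ℕ) :
    u N = (X ^ N %ₘ p).coeff k := by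
  refine congrFun (eq_of_recurrence (v := fun N => (X ^ N %ₘ p).coeff k) hp hu
    (sum_coeff_mul_coeff_X_pow_add_modByMonic hp · k) fun j hj => ?_) N
  nontriviality R
  rw [hinit j hj, (modByMonic_eq_self_iff hp).2, coeff_X_pow]
  · simp only [eq_comm]
  · rw [degree_X_pow, degree_eq_natDegree hp.ne_zero]
    exact_mod_cast hj

end Recurrence

section Taylor

variable {R : Type*} [CommRing R]

theorem taylor_coeff_eq_sum {q : R[X]} {r : ℕ} (hq : q.natDegree < r) (a : R) (t : ℕ) :
    (taylor a q).coeff t = ∑ j : Fin r, q.coeff j * (taylor a (X ^ (j : ℕ))).coeff t := by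
  conv_lhs => rw [q.as_sum_range' r hq]
  rw [map_sum, finsetSum_coeff, ← Fin.sum_univ_eq_sum_range]
  refine sum_congr rfl fun j _ => ?_
  rw [← C_mul_X_pow_eq_monomial, taylor_mul, taylor_C, coeff_C_mul]

theorem taylor_X_sub_C_pow (a : R) (t : ℕ) : taylor a ((X - C a) ^ t) = X ^ t := by
  rw [taylor_apply, pow_comp, sub_comp, X_comp, C_comp, add_sub_cancel_right]

theorem taylor_coeff_eq_zero_of_dvd {a : R} {t : ℕ} {q : R[X]} (h : (X - C a) ^ (t + 1) ∣ q) :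
    (taylor a q).coeff t = 0 := by
  obtain ⟨w, rfl⟩ := h
  rw [taylor_mul, taylor_X_sub_C_pow, coeff_X_pow_mul', if_neg (by omega)]

theorem taylor_coeff_X_sub_C_pow_mul (a : R) (t : ℕ) (q : R[X]) :
    (taylor a ((X - C a) ^ t * q)).coeff t = q.eval a := by
  rw [taylor_mul, taylor_X_sub_C_pow, coeff_X_pow_mul', if_pos le_rfl, Nat.sub_self,
    taylor_coeff_zero]

theorem taylor_coeff_modByMonic {p : R[X]} {a : R} {t : ℕ}
    (h : (X - C a) ^ (t + 1) ∣ p) (q : R[X]) :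
    (taylor a (q %ₘ p)).coeff t = (taylor a q).coeff t := by
  conv_rhs => rw [← modByMonic_add_div q p]
  rw [map_add, coeff_add, taylor_coeff_eq_zero_of_dvd (h.mul_right _), add_zero]

theorem taylor_comp (a : R) (q φ : R[X]) :
    taylor a (q.comp φ) = (taylor (φ.eval a) q).comp (taylor a φ - C (φ.eval a)) := by
  simp only [taylor_apply, comp_assoc, add_comp, X_comp, C_comp, sub_add_cancel]

theorem X_dvd_taylor_sub_C_eval (a : R) (φ : R[X]) : X ∣ taylor a φ - C (φ.eval a) := by
  rw [X_dvd_iff, coeff_sub, taylor_coeff_zero, coeff_C_zero, sub_self]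

theorem coeff_comp_eq_sum_of_X_dvd {D : R[X]} (hD : X ∣ D) (f : R[X]) {t M : ℕ} (ht : t < M) :
    (f.comp D).coeff t = ∑ u ∈ range M, f.coeff u * (D ^ u).coeff t := by
  have hvanish : ∀ u, t < u → (D ^ u).coeff t = 0 := fun u hu =>
    X_pow_dvd_iff.1 (pow_dvd_pow_of_dvd hD u) t hu
  rw [comp_eq_sum_left, sum_over_range' _ (fun _ => by simp) (f.natDegree + 1 + M)
    (by omega), finsetSum_coeff]
  simp only [coeff_C_mul]
  refine (sum_subset (range_subset_range.2 (by omega)) fun u hu hu' => ?_).symm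
  rw [hvanish u (by simp only [mem_range] at hu'; omega), mul_zero]

theorem coeff_pow_self_of_X_dvd {D : R[X]} (hD : X ∣ D) (t : ℕ) :
    (D ^ t).coeff t = D.coeff 1 ^ t := by
  obtain ⟨w, rfl⟩ := hD
  rw [mul_pow, coeff_X_pow_mul', if_pos le_rfl, Nat.sub_self, ← constantCoeff_apply, map_pow,
    coeff_X_mul, constantCoeff_apply]

end Taylor

section Blocks

variable {s : ℕ} {m : Fin s → ℕ}

theorem finSigmaFinEquiv_apply_eq_sum_Iio (c : (l : Fin s) × Fin (m l)) :
    (finSigmaFinEquiv c : ℕ) = ∑ i ∈ Iio c.1, m i + c.2 := by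
  rw [finSigmaFinEquiv_apply]
  congr 1
  refine sum_bij (fun i _ => Fin.castLE c.1.2.le i) (fun i _ => by
    rw [mem_Iio, Fin.lt_def, Fin.val_castLE]; exact i.isLt)
    (fun i _ j _ h => Fin.castLE_injective _ h) (fun j hj => ?_) fun _ _ => rfl
  rw [mem_Iio, Fin.lt_def] at hj
  exact ⟨⟨j, hj⟩, mem_univ _, rfl⟩

theorem sum_Iio_add_le_sum_Iio {l l' : Fin s} (h : l < l') :
    ∑ i ∈ Iio l, m i + m l ≤ ∑ i ∈ Iio l', m i := by
  rw [add_comm, ← sum_insert notMem_Iio_self]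
  exact sum_le_sum_of_subset fun i hi => by
    simp only [mem_insert, mem_Iio] at hi ⊢
    omega

theorem lex_of_lt_finSigmaFinEquiv_symm {k k' : Fin (∑ l, m l)} (h : k < k') :
    (finSigmaFinEquiv.symm k).1 < (finSigmaFinEquiv.symm k').1 ∨
      (finSigmaFinEquiv.symm k).1 = (finSigmaFinEquiv.symm k').1 ∧
        ((finSigmaFinEquiv.symm k).2 : ℕ) < (finSigmaFinEquiv.symm k').2 := by
  rw [Fin.lt_def, ← finSigmaFinEquiv.apply_symm_apply k, ← finSigmaFinEquiv.apply_symm_apply k',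
    finSigmaFinEquiv_apply_eq_sum_Iio, finSigmaFinEquiv_apply_eq_sum_Iio] at h
  generalize finSigmaFinEquiv.symm k = c, finSigmaFinEquiv.symm k' = c' at h ⊢
  obtain ⟨l, t⟩ := c
  obtain ⟨l', t'⟩ := c'
  obtain hl | rfl | hl := lt_trichotomy l l'
  · exact .inl hl
  · exact .inr ⟨rfl, by simpa using h⟩
  · have := sum_Iio_add_le_sum_Iio (m := m) hl
    have := t'.isLt
    simp only at h
    omega

@[simp]
theorem finSigmaFinEquiv_symm_apply_apply_snd (c : (l : Fin s) × Fin (m l)) :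
    ((finSigmaFinEquiv.symm (finSigmaFinEquiv c)).2 : ℕ) = c.2 := by
  rw [Equiv.symm_apply_apply]

end Blocks

section HermiteMatrix

noncomputable section

variable {R : Type*} [CommRing R] {s : ℕ} (m : Fin s → ℕ)

/-- Row `k` belongs to the node `⟨l, t⟩ = finSigmaFinEquiv.symm k` and holds the `t`-th Taylor
coefficients at `β l` of the polynomials `q j`. -/
def hermiteMatrix (β : Fin s → R) (q : Fin (∑ l, m l) → R[X]) :
    Matrix (Fin (∑ l, m l)) (Fin (∑ l, m l)) R :=
  of fun k j =>
    let c := finSigmaFinEquiv.symm k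
    (taylor (β c.1) (q j)).coeff c.2

/-- Its entry at the node `⟨l, t⟩` and column `j` is `j.choose t * β l ^ (j - t)`. -/
abbrev confluentVandermonde (β : Fin s → R) : Matrix (Fin (∑ l, m l)) (Fin (∑ l, m l)) R :=
  hermiteMatrix m β fun j => X ^ (j : ℕ)

def taylorCompMatrix (α : Fin s → R) (φ : R[X]) :
    Matrix (Fin (∑ l, m l)) (Fin (∑ l, m l)) R :=
  of fun k k' =>
    let c := finSigmaFinEquiv.symm k
    let c' := finSigmaFinEquiv.symm k'
    if c.1 = c'.1 then ((taylor (α c'.1) φ - C (φ.eval (α c'.1))) ^ (c'.2 : ℕ)).coeff c.2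
    else 0

variable {m}

theorem hermiteMatrix_eq_mul (β : Fin s → R) {q : Fin (∑ l, m l) → R[X]}
    (hq : ∀ j, (q j).natDegree < ∑ l, m l) :
    hermiteMatrix m β q =
      confluentVandermonde m β * of fun i j : Fin (∑ l, m l) => (q j).coeff i := by
  ext k j
  simp only [hermiteMatrix, mul_apply, of_apply]
  rw [taylor_coeff_eq_sum (hq j)]
  exact sum_congr rfl fun i _ => mul_comm _ _

theorem hermiteMatrix_modByMonic (α : Fin s → R) {p : R[X]}
    (hp : ∀ l, (X - C (α l)) ^ m l ∣ p) (q : Fin (∑ l, m l) → R[X]) :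
    hermiteMatrix m α (fun j => q j %ₘ p) = hermiteMatrix m α q := by
  ext k j
  exact taylor_coeff_modByMonic
    ((pow_dvd_pow _ (finSigmaFinEquiv.symm k).2.isLt).trans (hp _)) _

theorem det_confluentVandermonde (β : Fin s → R) :
    (confluentVandermonde m β).det = ∏ i, ∏ j ∈ Ioi i, (β j - β i) ^ (m i * m j) := by
  nontriviality R
  -- `g k` is monic of degree `k` and vanishes to order `t + 1` at every node `⟨l, t⟩` before
  -- `k`, so multiplying `V` by the (unitriangular) coefficient matrix of `g` makes it triangular.
  set g : Fin (∑ l, m l) → R[X] := fun k =>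
    let c := finSigmaFinEquiv.symm k
    (X - C (β c.1)) ^ (c.2 : ℕ) * ∏ i ∈ Iio c.1, (X - C (β i)) ^ m i
  have hmonic : ∀ k, (g k).Monic := fun k =>
    ((monic_X_sub_C _).pow _).mul (monic_prod_of_monic _ _ fun i _ => (monic_X_sub_C _).pow _)
  have hdeg : ∀ k, (g k).natDegree = k := fun k => by
    rw [((monic_X_sub_C _).pow _).natDegree_mul
      (monic_prod_of_monic _ _ fun i _ => (monic_X_sub_C _).pow _),
      natDegree_prod_of_monic _ _ fun i _ => (monic_X_sub_C _).pow _]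
    simp only [(monic_X_sub_C _).natDegree_pow, natDegree_X_sub_C, mul_one]
    rw [add_comm, ← finSigmaFinEquiv_apply_eq_sum_Iio, Equiv.apply_symm_apply]
  have hlower : (hermiteMatrix m β g).IsLowerTriangular := by
    intro k k' hkk'
    refine taylor_coeff_eq_zero_of_dvd ?_
    rcases lex_of_lt_finSigmaFinEquiv_symm (k := k) (k' := k') hkk' with hl | ⟨hl, ht⟩
    · refine ((pow_dvd_pow _ (finSigmaFinEquiv.symm k).2.isLt).trans ?_).mul_left _
      exact dvd_prod_of_mem _ (mem_Iio.2 hl)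
    · rw [congrArg β hl]
      exact (pow_dvd_pow _ ht).mul_right _
  rw [← mul_one (confluentVandermonde m β).det, ← det_matrixOfPolynomials g hdeg hmonic,
    ← det_mul, ← hermiteMatrix_eq_mul β fun k => (hdeg k).trans_lt k.isLt,
    det_of_isLowerTriangular _ hlower]
  calc ∏ k, hermiteMatrix m β g k k
      = ∏ k, ∏ i ∈ Iio (finSigmaFinEquiv.symm k).1,
          (β (finSigmaFinEquiv.symm k).1 - β i) ^ m i := by
        refine prod_congr rfl fun k _ => ?_
        simp only [hermiteMatrix, of_apply, g, taylor_coeff_X_sub_C_pow_mul, eval_prod, eval_pow,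
          eval_sub, eval_X, eval_C]
    _ = ∏ l, ∏ i ∈ Iio l, (β l - β i) ^ (m i * m l) := by
        rw [finSigmaFinEquiv.symm.prod_comp fun c => ∏ i ∈ Iio c.1, (β c.1 - β i) ^ m i,
          Fintype.prod_sigma]
        simp only [prod_const, card_univ, Fintype.card_fin, ← prod_pow, ← pow_mul]
    _ = ∏ i, ∏ j ∈ Ioi i, (β j - β i) ^ (m i * m j) :=
        prod_comm' fun _ _ => by simp only [mem_Iio, mem_Ioi, mem_univ, and_true, true_and]


theorem hermiteMatrix_comp (α : Fin s → R) (φ : R[X]) (q : Fin (∑ l, m l) → R[X]) :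
    hermiteMatrix m α (fun j => (q j).comp φ) =
      taylorCompMatrix m α φ * hermiteMatrix m (fun l => φ.eval (α l)) q := by
  ext k j
  obtain ⟨⟨l, t⟩, rfl⟩ := finSigmaFinEquiv.surjective k
  rw [mul_apply, ← finSigmaFinEquiv.sum_comp, Fintype.sum_sigma]
  simp only [hermiteMatrix, taylorCompMatrix, of_apply, Equiv.symm_apply_apply,
    finSigmaFinEquiv_symm_apply_apply_snd, ite_mul, zero_mul, sum_ite_irrel, sum_const_zero,
    Fintype.sum_ite_eq]
  rw [taylor_comp, coeff_comp_eq_sum_of_X_dvd (X_dvd_taylor_sub_C_eval _ _) _ t.isLt,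
    ← Fin.sum_univ_eq_sum_range]
  exact sum_congr rfl fun u _ => mul_comm _ _

theorem det_taylorCompMatrix (α : Fin s → R) (φ : R[X]) :
    (taylorCompMatrix m α φ).det = ∏ l, φ.derivative.eval (α l) ^ (m l).choose 2 := by
  have hlower : (taylorCompMatrix m α φ).IsLowerTriangular := by
    intro k k' hkk'
    rcases lex_of_lt_finSigmaFinEquiv_symm (k := k) (k' := k') hkk' with hl | ⟨hl, ht⟩
    · exact if_neg hl.ne
    · exact (if_pos hl).trans <|
        X_pow_dvd_iff.1 (pow_dvd_pow_of_dvd (X_dvd_taylor_sub_C_eval _ _) _) _ ht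
  rw [det_of_isLowerTriangular _ hlower, ← finSigmaFinEquiv.prod_comp, Fintype.prod_sigma]
  refine prod_congr rfl fun l _ => ?_
  simp only [taylorCompMatrix, of_apply, Equiv.symm_apply_apply,
    finSigmaFinEquiv_symm_apply_apply_snd, if_true,
    coeff_pow_self_of_X_dvd (X_dvd_taylor_sub_C_eval _ _), coeff_sub, taylor_coeff_one, coeff_C,
    if_neg one_ne_zero, sub_zero]
  rw [Fin.prod_univ_eq_prod_range (fun t => _ ^ t), prod_pow_eq_pow_sum, sum_range_id,
    Nat.choose_two_right]
end

end HermiteMatrix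

theorem det_minor_zero_of_row_zero {R : Type*} [CommRing R] {r : ℕ} (f : ℕ → ℕ → R)
    (hf : ∀ k < r, f 0 k = if k = 0 then 1 else 0) :
    (of fun h k : Fin (r - 1) => f (h + 1) (k + 1)).det =
      (of fun h k : Fin r => f h k).det := by
  cases r with
  | zero =>
    have : IsEmpty (Fin (0 - 1)) := inferInstanceAs (IsEmpty (Fin 0))
    rw [det_isEmpty, det_isEmpty]
  | succ N =>
    rw [det_succ_row_zero, sum_eq_single 0 (fun j _ hj => by
      simp [hf j j.isLt, Fin.val_ne_zero_iff.2 hj]) (by simp)]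
    rw [Fin.succAbove_zero]
    simp only [of_apply, Fin.val_zero, pow_zero, hf 0 N.succ_pos, if_true, one_mul]
    rfl

section Determinant

variable {F : Type*} [Field F]

theorem monic_prod_X_sub_C_pow {s : ℕ} (α : Fin s → F) (m : Fin s → ℕ) :
    (∏ l, (X - C (α l)) ^ m l).Monic :=
  monic_prod_of_monic _ _ fun _ _ => (monic_X_sub_C _).pow _

theorem natDegree_prod_X_sub_C_pow {s : ℕ} (α : Fin s → F) (m : Fin s → ℕ) :
    (∏ l, (X - C (α l)) ^ m l).natDegree = ∑ l, m l := by
  rw [natDegree_prod_of_monic _ _ fun _ _ => (monic_X_sub_C _).pow _]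
  simp only [(monic_X_sub_C _).natDegree_pow, natDegree_X_sub_C, mul_one]

theorem det_coeff_X_pow_mul_modByMonic {s : ℕ} {m : Fin s → ℕ} {α : Fin s → F}
    (hα : Function.Injective α) (n : ℕ) :
    (of fun h k : Fin (∑ l, m l) =>
        (X ^ ((h : ℕ) * n) %ₘ ∏ l, (X - C (α l)) ^ m l).coeff k).det =
      (n : F) ^ (∑ l, (m l).choose 2) * (∏ l, α l ^ ((m l).choose 2 * (n - 1))) *
        ∏ i, ∏ j ∈ Ioi i, ((α j ^ n - α i ^ n) / (α j - α i)) ^ (m i * m j) := by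
  set p : F[X] := ∏ l, (X - C (α l)) ^ m l
  set A := of fun h k : Fin (∑ l, m l) => (X ^ ((h : ℕ) * n) %ₘ p).coeff k
  have hdeg : p.natDegree = ∑ l, m l := natDegree_prod_X_sub_C_pow α m
  have hrem (h : Fin (∑ l, m l)) : (X ^ ((h : ℕ) * n) %ₘ p).natDegree < ∑ l, m l := by
    refine (natDegree_modByMonic_lt _ (monic_prod_X_sub_C_pow α m) fun hp1 => ?_).trans_eq hdeg
    have h0 : p.natDegree = 0 := by rw [show p = 1 from hp1, natDegree_one]
    exact absurd h.isLt (by omega)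
  have hdvd : ∀ l, (X - C (α l)) ^ m l ∣ p := fun l => dvd_prod_of_mem _ (mem_univ l)
  have key : (confluentVandermonde m α).det * A.det =
      (taylorCompMatrix m α (X ^ n)).det * (confluentVandermonde m fun l => α l ^ n).det :=
    calc (confluentVandermonde m α).det * A.det
        = (hermiteMatrix m α fun h => X ^ ((h : ℕ) * n) %ₘ p).det := by
          rw [hermiteMatrix_eq_mul α hrem, det_mul, ← det_transpose A]
          rfl
      _ = (hermiteMatrix m α fun h => (X ^ (h : ℕ)).comp (X ^ n)).det := by
          rw [hermiteMatrix_modByMonic α hdvd]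
          simp only [X_pow_comp, ← pow_mul, mul_comm n]
      _ = _ := by
          rw [hermiteMatrix_comp, det_mul]
          simp only [eval_pow, eval_X]
  rw [det_confluentVandermonde, det_confluentVandermonde, det_taylorCompMatrix] at key
  simp only [derivative_X_pow, eval_mul, eval_C, eval_pow, eval_X] at key
  have hP : ∏ i, ∏ j ∈ Ioi i, (α j - α i) ^ (m i * m j) ≠ 0 :=
    prod_ne_zero_iff.2 fun i _ => prod_ne_zero_iff.2 fun j hj =>
      pow_ne_zero _ (sub_ne_zero.2 (hα.ne (mem_Ioi.1 hj).ne'))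
  have hdiag : (n : F) ^ (∑ l, (m l).choose 2) * ∏ l, α l ^ ((m l).choose 2 * (n - 1)) =
      ∏ l, ((n : F) * α l ^ (n - 1)) ^ (m l).choose 2 := by
    simp only [mul_pow, prod_mul_distrib, prod_pow_eq_pow_sum, ← pow_mul, mul_comm (n - 1)]
  simp only [div_pow, prod_div_distrib]
  rw [hdiag, mul_div_assoc', eq_div_iff hP]
  linear_combination key

end Determinant

theorem det_impulse_eval_general
    {F : Type*} [Field F]
    (s : ℕ) (m : Fin s → ℕ)
    (r : ℕ) (hr : r = ∑ l, m l)
    (α : Fin s → F) (hinj : Function.Injective α)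
    (X : ℕ → ℕ → F)
    (hXrec : ∀ k < r, ∀ n : ℕ,
      ∑ i ∈ Finset.range (r + 1),
        (∏ l, (Polynomial.X - Polynomial.C (α l)) ^ m l : Polynomial F).coeff i * X k (n + i) = 0)
    (hXinit : ∀ k < r, ∀ j < r, X k j = if j = k then 1 else 0)
    (n : ℕ) :
    Matrix.det (Matrix.of fun h k : Fin (r - 1) =>
        X ((k : ℕ) + 1) (((h : ℕ) + 1) * n)) =
      ((n : F) ^ (∑ l, (m l).choose 2)) *
        (∏ l, α l ^ ((m l).choose 2 * (n - 1))) *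
        ∏ i : Fin s, ∏ j ∈ Finset.Ioi i,
          ((α j ^ n - α i ^ n) / (α j - α i)) ^ (m i * m j) := by
  subst hr
  have hdeg := natDegree_prod_X_sub_C_pow α m
  have hX : ∀ k < ∑ l, m l, ∀ N,
      X k N = (Polynomial.X ^ N %ₘ ∏ l, (Polynomial.X - C (α l)) ^ m l).coeff k :=
    fun k hk => eq_coeff_X_pow_modByMonic_of_recurrence (monic_prod_X_sub_C_pow α m)
      (by rw [hdeg]; exact hXrec k hk) (by rw [hdeg]; exact hXinit k hk)
  rw [det_minor_zero_of_row_zero (fun h k => X k (h * n)) fun k hk => by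
      rw [zero_mul, hXinit k hk 0 (by omega)]; simp only [eq_comm],
    ← det_coeff_X_pow_mul_modByMonic hinj n]
  congr with h k
  exact hX k k.isLt _

/-- For the impulse sequences of a non-degenerate linear recurrence of order `r`
with characteristic polynomial `∏ (x - α_l)^{m_l}`, the determinant
`D = det(X_{hn}^{(k)})_{1 ≤ h,k ≤ r-1}` equals
`n^{Σ C(m_l,2)} · ∏ α_l^{C(m_l,2)(n-1)} · ∏_{i<j} ((α_j^n - α_i^n)/(α_j - α_i))^{m_i m_j}`. -/
theorem det_impulse_eval
    {F : Type*} [Field F] [CharZero F]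
    (s : ℕ) (m : Fin s → ℕ) (hm : ∀ l, 0 < m l)
    (r : ℕ) (hr : r = ∑ l, m l)
    (α : Fin s → F) (hα0 : ∀ l, α l ≠ 0) (hinj : Function.Injective α)
    (hnd : ∀ i j : Fin s, i ≠ j → ∀ k : ℕ, 1 ≤ k → (α i / α j) ^ k ≠ 1)
    (X : ℕ → ℕ → F)
    (hXrec : ∀ k < r, ∀ n : ℕ,
      ∑ i ∈ Finset.range (r + 1),
        (∏ l, (Polynomial.X - Polynomial.C (α l)) ^ m l : Polynomial F).coeff i * X k (n + i) = 0)
    (hXinit : ∀ k < r, ∀ j < r, X k j = if j = k then 1 else 0)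
    (n : ℕ) (hn : 1 ≤ n) :
    Matrix.det (Matrix.of fun h k : Fin (r - 1) =>
        X ((k : ℕ) + 1) (((h : ℕ) + 1) * n)) =
      ((n : F) ^ (∑ l, (m l).choose 2)) *
        (∏ l, α l ^ ((m l).choose 2 * (n - 1))) *
        ∏ i : Fin s, ∏ j ∈ Finset.Ioi i,
          ((α j ^ n - α i ^ n) / (α j - α i)) ^ (m i * m j) :=
  det_impulse_eval_general s m r hr α hinj X hXrec hXinit n
end

section
/- Let S = (S_n) be a non-degenerate linear recurrence sequence of order r with minimal polynomial having r distinct roots α_1,…,α_r (all simple). If S is a divisibility sequence (S_0 = 0, S_1 = 1, S_n ∣ S_{mn} for all m,n ≥ 1), then for every n ≥ 0, S_n divides ∏_{1 ≤ i < j ≤ r} (α_j^n − α_i^n)/(α_j − α_i). -/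
/-!
Let `f = ∏ (X - α l)` and let `E` be the `r × r` matrix whose `i`-th row holds the coefficients
of `X ^ (n * i) mod f`. A sequence satisfies the recurrence of `f` exactly when the functional
`X ^ k ↦ S k` kills the multiples of `f`, so `E` maps the initial vector `(S 0, …, S (r - 1))` to
`(S (n * i))ᵢ`, a multiple of `S n`. Since `S 1 = 1`, putting that vector in column `1` of `E` does
not change `det E`, so `S n ∣ det E`. The root power sequences `α l ^ k` satisfy the same
recurrence, which gives `E * (vandermonde α)ᵀ = (vandermonde (α ^ n))ᵀ`, so `det E` is the
product in the theorem. All of this happens in the ring generated by the `S k` and the `α l`.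
-/
open Polynomial Finset Matrix

section CommRing

variable {R : Type*} [CommRing R]

def sequenceFunctional (s : ℕ → R) : R[X] →ₗ[R] R :=
  lsum fun k => LinearMap.mulRight R (s k)

variable {s : ℕ → R} {f : R[X]}

theorem sequenceFunctional_monomial (k : ℕ) (a : R) :
    sequenceFunctional s (monomial k a) = a * s k := by
  simp [sequenceFunctional, sum_monomial_index]

theorem sequenceFunctional_X_pow (m : ℕ) : sequenceFunctional s (X ^ m) = s m := by
  rw [X_pow_eq_monomial, sequenceFunctional_monomial, one_mul]

theorem sequenceFunctional_eq_sum_range {p : R[X]} {d : ℕ} (hp : p.natDegree < d) :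
    sequenceFunctional s p = ∑ k ∈ range d, p.coeff k * s k := by
  rw [sequenceFunctional, lsum_apply]
  exact sum_over_range' p (fun k => zero_mul (s k)) d hp

theorem sequenceFunctional_pow (a : R) (p : R[X]) :
    sequenceFunctional (a ^ ·) p = p.eval a := by
  simp [sequenceFunctional, eval_eq_sum]

theorem sequenceFunctional_X_pow_mul (n : ℕ) :
    sequenceFunctional s (X ^ n * f) =
      ∑ i ∈ range (f.natDegree + 1), f.coeff i * s (n + i) := by
  conv_lhs => rw [f.as_sum_range_C_mul_X_pow]
  simp only [mul_sum, map_sum]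
  refine sum_congr rfl fun i _ => ?_
  rw [mul_left_comm, ← pow_add, C_mul_X_pow_eq_monomial, sequenceFunctional_monomial]

theorem sequenceFunctional_mul_eq_zero
    (hs : ∀ n, ∑ i ∈ range (f.natDegree + 1), f.coeff i * s (n + i) = 0) (q : R[X]) :
    sequenceFunctional s (q * f) = 0 := by
  induction q using Polynomial.induction_on' with
  | add p q hp hq => rw [add_mul, map_add, hp, hq, add_zero]
  | monomial n a =>
    rw [← C_mul_X_pow_eq_monomial, mul_assoc, ← smul_eq_C_mul, map_smul,
      sequenceFunctional_X_pow_mul, hs, smul_zero]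

theorem sequenceFunctional_modByMonic
    (hs : ∀ q, sequenceFunctional s (q * f) = 0) (p : R[X]) :
    sequenceFunctional s (p %ₘ f) = sequenceFunctional s p := by
  conv_rhs => rw [← modByMonic_add_div p f]
  rw [map_add, mul_comm, hs, add_zero]

theorem sum_coeff_X_pow_modByMonic_mul (hf : f.Monic)
    (hs : ∀ q, sequenceFunctional s (q * f) = 0) (m : ℕ) :
    ∑ k ∈ range f.natDegree, (X ^ m %ₘ f).coeff k * s k = s m := by
  rw [← sequenceFunctional_X_pow (s := s) m, ← sequenceFunctional_modByMonic hs]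
  by_cases hf1 : f = 1
  · simp [hf1]
  · exact (sequenceFunctional_eq_sum_range (natDegree_modByMonic_lt _ hf hf1)).symm

theorem one_lt_natDegree_of_sequenceFunctional_mul_eq_zero [Nontrivial R] (hf : f.Monic)
    (hs : ∀ q, sequenceFunctional s (q * f) = 0) (h0 : s 0 = 0) (h1 : s 1 = 1) :
    1 < f.natDegree := by
  by_contra! hd
  have hs1 := sum_coeff_X_pow_modByMonic_mul hf hs 1
  rw [h1, sum_eq_zero fun k hk => by rw [show k = 0 by simp at hk; omega, h0, mul_zero]] at hs1
  exact zero_ne_one hs1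

noncomputable def powModMatrix (f : R[X]) (r n : ℕ) : Matrix (Fin r) (Fin r) R :=
  Matrix.of fun i k => (X ^ (n * i) %ₘ f).coeff k

variable {r : ℕ}

theorem powModMatrix_mulVec (hf : f.Monic) (hr : f.natDegree = r)
    (hs : ∀ q, sequenceFunctional s (q * f) = 0) (n : ℕ) :
    powModMatrix f r n *ᵥ (fun k : Fin r => s k) = fun i : Fin r => s (n * i) := by
  ext i
  rw [← sum_coeff_X_pow_modByMonic_mul hf hs, hr, ← Fin.sum_univ_eq_sum_range]
  rfl

theorem powModMatrix_mul_vandermonde (hf : f.Monic) (hr : f.natDegree = r) {α : Fin r → R}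
    (hα : ∀ l, f.IsRoot (α l)) (n : ℕ) :
    powModMatrix f r n * (vandermonde α)ᵀ = (vandermonde fun l => α l ^ n)ᵀ := by
  ext i l
  have hs (q : R[X]) : sequenceFunctional (α l ^ ·) (q * f) = 0 := by
    rw [sequenceFunctional_pow, eval_mul, (hα l).eq_zero, mul_zero]
  simpa [Matrix.mul_apply, mulVec, dotProduct, pow_mul]
    using congrFun (powModMatrix_mulVec hf hr hs n) i

theorem det_powModMatrix_mul_det_vandermonde (hf : f.Monic) (hr : f.natDegree = r)
    {α : Fin r → R} (hα : ∀ l, f.IsRoot (α l)) (n : ℕ) :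
    (powModMatrix f r n).det * (vandermonde α).det = (vandermonde fun l => α l ^ n).det := by
  simpa using congrArg det (powModMatrix_mul_vandermonde hf hr hα n)

theorem dvd_det_of_mulVec_eq_smul {ι : Type*} [Fintype ι] [DecidableEq ι]
    {M : Matrix ι ι R} {v u : ι → R} {j : ι} {c : R} (hv : v j = 1) (h : M *ᵥ v = c • u) :
    c ∣ M.det := by
  have hcol := det_updateCol_sum M j v
  rw [hv, one_smul] at hcol
  refine ⟨(M.updateCol j u).det, ?_⟩
  rw [← hcol, ← det_updateCol_smul, ← h]
  congr
  ext k
  simp [mulVec, dotProduct, mul_comm]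

theorem dvd_det_powModMatrix (hf : f.Monic) (hr : f.natDegree = r)
    (hs : ∀ q, sequenceFunctional s (q * f) = 0) (h1 : s 1 = 1) (hr1 : 1 < r) {n : ℕ}
    (hdvd : ∀ i < r, s n ∣ s (n * i)) :
    s n ∣ (powModMatrix f r n).det := by
  choose u hu using hdvd
  exact dvd_det_of_mulVec_eq_smul (j := ⟨1, hr1⟩) (u := fun i : Fin r => u i i.2) h1
    ((powModMatrix_mulVec hf hr hs n).trans (funext fun i => hu i i.2))

theorem exists_mul_det_vandermonde_eq_det_vandermonde_pow [Nontrivial R] {α : Fin r → R}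
    (hs : ∀ k, ∑ i ∈ range (r + 1), (∏ l, (X - C (α l))).coeff i * s (k + i) = 0)
    (h0 : s 0 = 0) (h1 : s 1 = 1) {n : ℕ} (hdvd : ∀ i < r, s n ∣ s (n * i)) :
    ∃ t, s n * t * (vandermonde α).det = (vandermonde fun l => α l ^ n).det := by
  set f : R[X] := ∏ l, (X - C (α l))
  have hf : f.Monic := monic_prod_X_sub_C _ _
  have hr : f.natDegree = r := by simp [f]
  have hroots (l : Fin r) : f.IsRoot (α l) := by
    rw [IsRoot, eval_prod]
    exact prod_eq_zero (mem_univ l) (by simp)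
  have hf0 : ∀ q, sequenceFunctional s (q * f) = 0 :=
    sequenceFunctional_mul_eq_zero (hr ▸ hs)
  obtain ⟨t, ht⟩ := dvd_det_powModMatrix hf hr hf0 h1
    (hr ▸ one_lt_natDegree_of_sequenceFunctional_mul_eq_zero hf hf0 h0 h1) hdvd
  exact ⟨t, ht ▸ det_powModMatrix_mul_det_vandermonde hf hr hroots n⟩

end CommRing

theorem prod_Ioi_div_eq_of_mul_det_vandermonde {K : Type*} [Field K] {r : ℕ} {α : Fin r → K}
    (hα : Function.Injective α) {n : ℕ} {x : K}
    (h : x * (vandermonde α).det = (vandermonde fun l => α l ^ n).det) :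
    ∏ i : Fin r, ∏ j ∈ Ioi i, (α j ^ n - α i ^ n) / (α j - α i) = x := by
  simp_rw [prod_div_distrib]
  rw [← det_vandermonde α, ← det_vandermonde (fun l => α l ^ n), ← h,
    mul_div_cancel_right₀ _ (det_vandermonde_ne_zero_iff.mpr hα)]

theorem divisibility_sequence_divides_resultant_simple_roots_general
    {F : Type*} [Field F]
    (r : ℕ) (α : Fin r → F) (hinj : Function.Injective α)
    (S : ℕ → F)
    (hSrec : ∀ n : ℕ,
      ∑ i ∈ Finset.range (r + 1),
        (∏ l, (Polynomial.X - Polynomial.C (α l)) : Polynomial F).coeff i * S (n + i) = 0)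
    (hS0 : S 0 = 0) (hS1 : S 1 = 1)
    (hdiv : ∀ n, 1 ≤ n → ∀ k, 1 ≤ k →
      ∃ t ∈ Subring.closure (Set.range S ∪ Set.range α), S (k * n) = S n * t) :
    ∀ n : ℕ,
      ∃ t ∈ Subring.closure (Set.range S ∪ Set.range α),
        (∏ i : Fin r, ∏ j ∈ Finset.Ioi i, (α j ^ n - α i ^ n) / (α j - α i)) = S n * t := by
  intro n
  set A := Subring.closure (Set.range S ∪ Set.range α)
  let S' : ℕ → A := fun k => ⟨S k, Subring.subset_closure (.inl ⟨k, rfl⟩)⟩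
  let α' : Fin r → A := fun l => ⟨α l, Subring.subset_closure (.inr ⟨l, rfl⟩)⟩
  have hrec (k : ℕ) : ∑ i ∈ range (r + 1), (∏ l, (X - C (α' l))).coeff i * S' (k + i) = 0 := by
    have hmap : (∏ l, (X - C (α' l))).map A.subtype = ∏ l, (X - C (α l)) := by
      simp [Polynomial.map_prod, α']
    refine Subtype.ext ?_
    simpa [← hmap] using hSrec k
  have hS0' : S' 0 = 0 := Subtype.ext hS0
  have hcol : ∀ i < r, S' n ∣ S' (n * i) := by
    intro i _
    rcases Nat.eq_zero_or_pos n with rfl | hn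
    · simp
    rcases Nat.eq_zero_or_pos i with rfl | hi
    · rw [mul_zero, hS0']
      exact dvd_zero _
    obtain ⟨t, ht, hnt⟩ := hdiv n hn i hi
    exact ⟨⟨t, ht⟩, Subtype.ext <| by simpa [S', mul_comm] using hnt⟩
  obtain ⟨t, ht⟩ :=
    exists_mul_det_vandermonde_eq_det_vandermonde_pow hrec hS0' (Subtype.ext hS1) hcol
  refine ⟨t, t.2, prod_Ioi_div_eq_of_mul_det_vandermonde hinj ?_⟩
  rw [det_vandermonde, det_vandermonde] at ht ⊢
  simpa using congrArg Subtype.val ht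

/-- Simple-roots case of the Bézivin–Pethő–van der Poorten theorem: a
non-degenerate divisibility sequence of order `r` whose characteristic polynomial
`∏ (x - α_i)` has `r` distinct (simple) roots divides
`∏_{i<j} (α_j^n - α_i^n)/(α_j - α_i)`, divisibility in the ring generated by the `S_n`
and the roots `α_i`. -/
theorem divisibility_sequence_divides_resultant_simple_roots
    {F : Type*} [Field F] [CharZero F]
    (r : ℕ) (α : Fin r → F) (hα0 : ∀ l, α l ≠ 0) (hinj : Function.Injective α)
    (hnd : ∀ i j : Fin r, i ≠ j → ∀ k : ℕ, 1 ≤ k → (α i / α j) ^ k ≠ 1)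
    (S : ℕ → F)
    (hSrec : ∀ n : ℕ,
      ∑ i ∈ Finset.range (r + 1),
        (∏ l, (Polynomial.X - Polynomial.C (α l)) : Polynomial F).coeff i * S (n + i) = 0)
    (hS0 : S 0 = 0) (hS1 : S 1 = 1)
    (hdiv : ∀ n, 1 ≤ n → ∀ k, 1 ≤ k →
      ∃ t ∈ Subring.closure (Set.range S ∪ Set.range α), S (k * n) = S n * t) :
    ∀ n : ℕ,
      ∃ t ∈ Subring.closure (Set.range S ∪ Set.range α),
        (∏ i : Fin r, ∏ j ∈ Finset.Ioi i, (α j ^ n - α i ^ n) / (α j - α i)) = S n * t :=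
  divisibility_sequence_divides_resultant_simple_roots_general r α hinj S hSrec hS0 hS1 hdiv
end

section
/- Let α_1, α_2, α_3 be distinct nonzero elements of a field of characteristic zero with no ratio α_i/α_j (i ≠ j) a root of unity, and let X^{(1)}, X^{(2)} be the impulse sequences of order 3 with characteristic polynomial (x−α_1)(x−α_2)(x−α_3) and initial conditions X^{(1)} = (0,1,0), X^{(2)} = (0,0,1). Then for all n ≥ 1, X_n^{(1)} X_{2n}^{(2)} − X_n^{(2)} X_{2n}^{(1)} = ∏_{1 ≤ i < j ≤ 3} (α_j^n − α_i^n)/(α_j − α_i). -/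
/-!
Both impulse sequences solve the recurrence whose characteristic polynomial is
`(X - α)(X - β)(X - γ)`, so for distinct roots they are linear combinations of `α ^ n`, `β ^ n`,
`γ ^ n`, with coefficients fixed by the three initial values. Substituting these Binet forms,
with `α ^ (2n) = (α ^ n) ^ 2`, turns the claim into a rational-function identity in
`α, β, γ, α ^ n, β ^ n, γ ^ n`.
-/

open Polynomial

namespace LinearRecurrence

section CommRing

variable {R : Type*} [CommRing R] (α β γ : R)

def ofRoots₃ : LinearRecurrence R where
  order := 3
  coeffs := ![α * β * γ, -(α * β + α * γ + β * γ), α + β + γ]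

theorem isSolution_ofRoots₃_iff {u : ℕ → R} :
    (ofRoots₃ α β γ).IsSolution u ↔ ∀ n, u (n + 3) = (α + β + γ) * u (n + 2)
      - (α * β + α * γ + β * γ) * u (n + 1) + α * β * γ * u n := by
  refine forall_congr' fun n ↦ ?_
  change u (n + 3) = ∑ i : Fin 3, ![α * β * γ, -(α * β + α * γ + β * γ), α + β + γ] i * u (n + i)
    ↔ _
  simp only [Fin.sum_univ_three, Fin.isValue, Matrix.cons_val, Fin.val_zero, Fin.val_one,
    Fin.val_two, add_zero]
  constructor <;> intro h <;> rw [h] <;> ring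

theorem charPoly_ofRoots₃ :
    (ofRoots₃ α β γ).charPoly = (X - C α) * (X - C β) * (X - C γ) := by
  change monomial 3 1 - ∑ i : Fin 3, monomial i
    (![α * β * γ, -(α * β + α * γ + β * γ), α + β + γ] i) = _
  simp only [Fin.sum_univ_three, ← C_mul_X_pow_eq_monomial, Fin.isValue, Matrix.cons_val,
    Fin.val_zero, Fin.val_one, Fin.val_two, map_add, map_mul, map_neg, map_one]
  ring

variable {α β γ}

theorem isSolution_ofRoots₃_geom {q : R} (hq : q = α ∨ q = β ∨ q = γ) :
    (ofRoots₃ α β γ).IsSolution fun n ↦ q ^ n := by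
  rw [geom_sol_iff_root_charPoly, charPoly_ofRoots₃]
  rcases hq with rfl | rfl | rfl <;> simp

theorem isSolution_ofRoots₃_binet (a b c : R) :
    (ofRoots₃ α β γ).IsSolution fun n ↦ a * α ^ n + b * β ^ n + c * γ ^ n := by
  have hgeom {q : R} (hq : q = α ∨ q = β ∨ q = γ) : (fun n ↦ q ^ n) ∈ (ofRoots₃ α β γ).solSpace :=
    (is_sol_iff_mem_solSpace _ _).mp (isSolution_ofRoots₃_geom hq)
  rw [is_sol_iff_mem_solSpace]
  exact add_mem (add_mem (Submodule.smul_mem _ a (hgeom (by simp)))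
    (Submodule.smul_mem _ b (hgeom (by simp)))) (Submodule.smul_mem _ c (hgeom (by simp)))

theorem ofRoots₃_eq_of_init {u v : ℕ → R} (hu : (ofRoots₃ α β γ).IsSolution u)
    (hv : (ofRoots₃ α β γ).IsSolution v) (h0 : u 0 = v 0) (h1 : u 1 = v 1) (h2 : u 2 = v 2) :
    u = v := by
  rw [eq_iff_eqOn_range_order _ u v hu hv]
  intro n hn
  simp only [ofRoots₃, Finset.coe_range, Set.mem_Iio] at hn
  interval_cases n <;> assumption

end CommRing

section Impulse

variable {F : Type*} [Field F] (α β γ : F)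

/-- The impulse solution with initial values `0, 1, 0`, in Binet form. -/
def impulseMid (n : ℕ) : F :=
  -(β + γ) / ((α - β) * (α - γ)) * α ^ n + -(α + γ) / ((β - α) * (β - γ)) * β ^ n
    + -(α + β) / ((γ - α) * (γ - β)) * γ ^ n

/-- The impulse solution with initial values `0, 0, 1`, in Binet form. -/
def impulseLast (n : ℕ) : F :=
  ((α - β) * (α - γ))⁻¹ * α ^ n + ((β - α) * (β - γ))⁻¹ * β ^ n + ((γ - α) * (γ - β))⁻¹ * γ ^ n

variable {α β γ} (hαβ : α ≠ β) (hαγ : α ≠ γ) (hβγ : β ≠ γ)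
include hαβ hαγ hβγ

theorem eq_impulseMid {u : ℕ → F} (hu : (ofRoots₃ α β γ).IsSolution u) (h0 : u 0 = 0)
    (h1 : u 1 = 1) (h2 : u 2 = 0) : u = impulseMid α β γ := by
  refine ofRoots₃_eq_of_init hu (isSolution_ofRoots₃_binet _ _ _) ?_ ?_ ?_ <;>
    simp only [h0, h1, h2, impulseMid] <;> field_simp <;> ring

theorem eq_impulseLast {u : ℕ → F} (hu : (ofRoots₃ α β γ).IsSolution u) (h0 : u 0 = 0)
    (h1 : u 1 = 0) (h2 : u 2 = 1) : u = impulseLast α β γ := by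
  refine ofRoots₃_eq_of_init hu (isSolution_ofRoots₃_binet _ _ _) ?_ ?_ ?_ <;>
    simp only [h0, h1, h2, impulseLast] <;> field_simp <;> ring

theorem impulseMid_mul_impulseLast_two_mul_sub (n : ℕ) :
    impulseMid α β γ n * impulseLast α β γ (2 * n) - impulseLast α β γ n * impulseMid α β γ (2 * n)
      = (β ^ n - α ^ n) / (β - α) * ((γ ^ n - α ^ n) / (γ - α)) * ((γ ^ n - β ^ n) / (γ - β)) := by
  simp only [impulseMid, impulseLast, pow_mul']
  generalize α ^ n = a, β ^ n = b, γ ^ n = c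
  field_simp
  ring

end Impulse

end LinearRecurrence

theorem impulse_order_three_identity_general
    {F : Type*} [Field F]
    (α₁ α₂ α₃ : F) (h12 : α₁ ≠ α₂) (h13 : α₁ ≠ α₃) (h23 : α₂ ≠ α₃)
    (X₁ X₂ : ℕ → F)
    (hrec₁ : ∀ n : ℕ, X₁ (n + 3) = (α₁ + α₂ + α₃) * X₁ (n + 2)
        - (α₁ * α₂ + α₁ * α₃ + α₂ * α₃) * X₁ (n + 1) + α₁ * α₂ * α₃ * X₁ n)
    (hrec₂ : ∀ n : ℕ, X₂ (n + 3) = (α₁ + α₂ + α₃) * X₂ (n + 2)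
        - (α₁ * α₂ + α₁ * α₃ + α₂ * α₃) * X₂ (n + 1) + α₁ * α₂ * α₃ * X₂ n)
    (hX₁ : X₁ 0 = 0 ∧ X₁ 1 = 1 ∧ X₁ 2 = 0)
    (hX₂ : X₂ 0 = 0 ∧ X₂ 1 = 0 ∧ X₂ 2 = 1) :
    ∀ n : ℕ, 1 ≤ n →
      X₁ n * X₂ (2 * n) - X₂ n * X₁ (2 * n) =
        ((α₂ ^ n - α₁ ^ n) / (α₂ - α₁)) * ((α₃ ^ n - α₁ ^ n) / (α₃ - α₁)) *
          ((α₃ ^ n - α₂ ^ n) / (α₃ - α₂)) := by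
  open LinearRecurrence in
  intro n _
  have hX₁_eq : X₁ = impulseMid α₁ α₂ α₃ :=
    eq_impulseMid h12 h13 h23 ((isSolution_ofRoots₃_iff _ _ _).2 hrec₁) hX₁.1 hX₁.2.1 hX₁.2.2
  have hX₂_eq : X₂ = impulseLast α₁ α₂ α₃ :=
    eq_impulseLast h12 h13 h23 ((isSolution_ofRoots₃_iff _ _ _).2 hrec₂) hX₂.1 hX₂.2.1 hX₂.2.2
  rw [hX₁_eq, hX₂_eq]
  exact impulseMid_mul_impulseLast_two_mul_sub h12 h13 h23 n

/-- The `r = 3` case of the generalized Vandermonde identity for impulse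
sequences: `X_n^{(1)} X_{2n}^{(2)} - X_n^{(2)} X_{2n}^{(1)} = ∏_{i<j} (α_j^n - α_i^n)/(α_j - α_i)`. -/
theorem impulse_order_three_identity
    {F : Type*} [Field F] [CharZero F]
    (α₁ α₂ α₃ : F) (h1 : α₁ ≠ 0) (h2 : α₂ ≠ 0) (h3 : α₃ ≠ 0)
    (h12 : α₁ ≠ α₂) (h13 : α₁ ≠ α₃) (h23 : α₂ ≠ α₃)
    (hnd12 : ∀ k : ℕ, 1 ≤ k → (α₁ / α₂) ^ k ≠ 1)
    (hnd13 : ∀ k : ℕ, 1 ≤ k → (α₁ / α₃) ^ k ≠ 1)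
    (hnd23 : ∀ k : ℕ, 1 ≤ k → (α₂ / α₃) ^ k ≠ 1)
    (X₁ X₂ : ℕ → F)
    (hrec₁ : ∀ n : ℕ, X₁ (n + 3) = (α₁ + α₂ + α₃) * X₁ (n + 2)
        - (α₁ * α₂ + α₁ * α₃ + α₂ * α₃) * X₁ (n + 1) + α₁ * α₂ * α₃ * X₁ n)
    (hrec₂ : ∀ n : ℕ, X₂ (n + 3) = (α₁ + α₂ + α₃) * X₂ (n + 2)
        - (α₁ * α₂ + α₁ * α₃ + α₂ * α₃) * X₂ (n + 1) + α₁ * α₂ * α₃ * X₂ n)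
    (hX₁ : X₁ 0 = 0 ∧ X₁ 1 = 1 ∧ X₁ 2 = 0)
    (hX₂ : X₂ 0 = 0 ∧ X₂ 1 = 0 ∧ X₂ 2 = 1) :
    ∀ n : ℕ, 1 ≤ n →
      X₁ n * X₂ (2 * n) - X₂ n * X₁ (2 * n) =
        ((α₂ ^ n - α₁ ^ n) / (α₂ - α₁)) * ((α₃ ^ n - α₁ ^ n) / (α₃ - α₁)) *
          ((α₃ ^ n - α₂ ^ n) / (α₃ - α₂)) :=
  impulse_order_three_identity_general α₁ α₂ α₃ h12 h13 h23 X₁ X₂ hrec₁ hrec₂ hX₁ hX₂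
end
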